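/- Let $a>0$, $b>0$, $c\in\mathbb{R}$, and $p>4$. Define $h:(0,\infty)\to\mathbb{R}$ by $h(t)=\frac{1}{2}a t^{2}+c - \frac{\alpha\rho^{2}}{4}\log t - \frac{b}{p} t^{p-2}$ where $\alpha<0$ and $\rho>0$. Then there exists a unique $t_{*}>0$ such that $h'(t_{*})=0$; moreover $t_{*}$ is a strict global maximum point of $h$, $h'(t)>0$ for $0<t<t_{*}$, and $h'(t)<0$ for $t>t_{*}$. -/

import Mathlib

/-!
The derivative factors as `h'(t) = t * g(t)` with `g = fiberingRatio a K M (p - 4)`, where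
`K = -αρ²/4 > 0` and `M = b(p-2)/p > 0`. Then `g` is strictly decreasing on `(0, ∞)`, tends
to `+∞` at `0⁺` and to `-∞` at `∞`, so it has exactly one zero `t*`; `h'` is positive before
`t*` and negative after it, which makes `t*` the strict global maximum of `h`.
-/

open Real Set Filter Topology

noncomputable def fiberingRatio (a K M q t : ℝ) : ℝ := a + K / t ^ 2 - M * t ^ q

section
variable {a K M q : ℝ}

theorem continuousOn_fiberingRatio : ContinuousOn (fiberingRatio a K M q) (Ioi 0) := by
  intro t ht
  have ht : t ≠ 0 := (mem_Ioi.1 ht).ne'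
  unfold fiberingRatio
  exact (continuousAt_const.add (continuousAt_const.div (continuousAt_id.pow 2) (pow_ne_zero 2 ht))
    |>.sub (continuousAt_const.mul (continuousAt_rpow_const t q (Or.inl ht)))).continuousWithinAt

theorem fiberingRatio_strictAntiOn (hK : 0 ≤ K) (hM : 0 < M) (hq : 0 < q) :
    StrictAntiOn (fiberingRatio a K M q) (Ioi 0) := by
  intro s hs t _ hst
  have hs : 0 < s := hs
  have hK' : K / t ^ 2 ≤ K / s ^ 2 :=
    div_le_div_of_nonneg_left hK (pow_pos hs 2) (pow_le_pow_left₀ hs.le hst.le 2)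
  have hM' : M * s ^ q < M * t ^ q := mul_lt_mul_of_pos_left (rpow_lt_rpow hs.le hst hq) hM
  unfold fiberingRatio
  linarith

theorem tendsto_fiberingRatio_nhdsGT_zero (hK : 0 < K) (hq : 0 ≤ q) :
    Tendsto (fiberingRatio a K M q) (𝓝[>] 0) atTop := by
  have hsing : Tendsto (fun t : ℝ => K / t ^ 2) (𝓝[>] 0) atTop := by
    simpa [div_eq_mul_inv, inv_pow] using
      ((tendsto_pow_atTop two_ne_zero).comp tendsto_inv_nhdsGT_zero).const_mul_atTop hK
  have hpow : Tendsto (fun t : ℝ => M * t ^ q) (𝓝[>] 0) (𝓝 (M * 0 ^ q)) :=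
    ((continuousAt_rpow_const 0 q (Or.inr hq)).tendsto.mono_left nhdsWithin_le_nhds).const_mul M
  exact (tendsto_const_nhds.add_atTop hsing).atTop_add hpow.neg

theorem tendsto_fiberingRatio_atTop (hM : 0 < M) (hq : 0 < q) :
    Tendsto (fiberingRatio a K M q) atTop atBot := by
  have hsing : Tendsto (fun t : ℝ => a + K / t ^ 2) atTop (𝓝 (a + K * 0)) := by
    simpa [div_eq_mul_inv, inv_pow] using
      (((tendsto_pow_atTop two_ne_zero).comp tendsto_id).inv_tendsto_atTop.const_mul K).const_add a
  have hpow : Tendsto (fun t : ℝ => M * t ^ q) atTop atTop :=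
    (tendsto_rpow_atTop hq).const_mul_atTop hM
  exact hsing.add_atBot (tendsto_neg_atTop_atBot.comp hpow)

end

theorem exists_pos_eq_zero_of_tendsto {g : ℝ → ℝ} (hg : ContinuousOn g (Ioi 0))
    (h0 : Tendsto g (𝓝[>] 0) atTop) (hinf : Tendsto g atTop atBot) :
    ∃ t, 0 < t ∧ g t = 0 := by
  obtain ⟨s, hs, hgs⟩ := ((h0.eventually_ge_atTop 0).and self_mem_nhdsWithin).exists
  obtain ⟨T, hgT, hT⟩ := ((hinf.eventually_le_atBot 0).and (eventually_gt_atTop 0)).exists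
  obtain ⟨t, ht, hg_zero⟩ := isPreconnected_Ioi.intermediate_value hT hgs hg ⟨hgT, hs⟩
  exact ⟨t, ht, hg_zero⟩

theorem lt_of_deriv_pos_of_deriv_neg {h : ℝ → ℝ} {x₀ c : ℝ} (hc : x₀ < c)
    (hcont : ContinuousOn h (Ioi x₀)) (hpos : ∀ t ∈ Ioo x₀ c, 0 < deriv h t)
    (hneg : ∀ t ∈ Ioi c, deriv h t < 0) {t : ℝ} (ht : x₀ < t) (hne : t ≠ c) :
    h t < h c := by
  rcases hne.lt_or_gt with htc | hct
  · refine strictMonoOn_of_deriv_pos (convex_Ioc x₀ c) (hcont.mono Ioc_subset_Ioi_self) ?_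
      ⟨ht, htc.le⟩ ⟨hc, le_rfl⟩ htc
    simpa only [interior_Ioc] using hpos
  · refine strictAntiOn_of_deriv_neg (convex_Ici c) (hcont.mono (Ici_subset_Ioi.2 hc)) ?_
      self_mem_Ici hct.le hct
    simpa only [interior_Ici] using hneg

theorem hasDerivAt_fibering (a b c α ρ p : ℝ) {t : ℝ} (ht : 0 < t) :
    HasDerivAt (fun t => (1/2) * a * t ^ 2 + c - α * ρ ^ 2 / 4 * Real.log t - b / p * t ^ (p - 2))
      (t * fiberingRatio a (-(α * ρ ^ 2 / 4)) (b * (p - 2) / p) (p - 4) t) t := by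
  have hd := ((((hasDerivAt_pow 2 t).const_mul ((1/2) * a)).add_const c).sub
    ((hasDerivAt_log ht.ne').const_mul (α * ρ ^ 2 / 4))).sub
    ((hasDerivAt_rpow_const (p := p - 2) (Or.inl ht.ne')).const_mul (b / p))
  refine hd.congr_deriv ?_
  have hpow : t ^ (p - 2 - 1) = t * t ^ (p - 4) := by
    rw [show p - 2 - 1 = 1 + (p - 4) by ring, rpow_add ht, rpow_one]
  rw [hpow, fiberingRatio]
  field_simp
  ring

theorem stmt0_general (a b c α ρ p : ℝ) (hb : 0 < b) (hp : 4 < p)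
    (hα : α < 0) (hρ : 0 < ρ) (h : ℝ → ℝ)
    (hdef : ∀ t : ℝ, 0 < t →
      h t = (1/2) * a * t ^ 2 + c - α * ρ ^ 2 / 4 * Real.log t - b / p * t ^ (p - 2)) :
    ∃ tstar : ℝ, 0 < tstar ∧ deriv h tstar = 0 ∧
      (∀ t, 0 < t → deriv h t = 0 → t = tstar) ∧
      (∀ t, 0 < t → t ≠ tstar → h t < h tstar) ∧
      (∀ t, 0 < t → t < tstar → 0 < deriv h t) ∧
      (∀ t, tstar < t → deriv h t < 0) := by
  set g := fiberingRatio a (-(α * ρ ^ 2 / 4)) (b * (p - 2) / p) (p - 4)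
  have hK : 0 < -(α * ρ ^ 2 / 4) := by nlinarith [pow_pos hρ 2]
  have hM : 0 < b * (p - 2) / p := div_pos (mul_pos hb (by linarith)) (by linarith)
  have hq : 0 < p - 4 := by linarith
  have hderiv : ∀ t, 0 < t → HasDerivAt h (t * g t) t := fun t ht =>
    (hasDerivAt_fibering a b c α ρ p ht).congr_of_eventuallyEq
      (eventually_of_mem (Ioi_mem_nhds ht) hdef)
  have hanti : StrictAntiOn g (Ioi 0) := fiberingRatio_strictAntiOn hK.le hM hq
  obtain ⟨tstar, htstar, hg_zero⟩ : ∃ t, 0 < t ∧ g t = 0 :=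
    exists_pos_eq_zero_of_tendsto continuousOn_fiberingRatio
      (tendsto_fiberingRatio_nhdsGT_zero hK hq.le) (tendsto_fiberingRatio_atTop hM hq)
  have hpos : ∀ t, 0 < t → t < tstar → 0 < deriv h t := fun t ht htt => by
    rw [(hderiv t ht).deriv]
    exact mul_pos ht (hg_zero ▸ hanti ht htstar htt)
  have hneg : ∀ t, tstar < t → deriv h t < 0 := fun t htt => by
    have ht := htstar.trans htt
    rw [(hderiv t ht).deriv]
    exact mul_neg_of_pos_of_neg ht (hg_zero ▸ hanti htstar ht htt)
  refine ⟨tstar, htstar, by rw [(hderiv tstar htstar).deriv, hg_zero, mul_zero],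
    fun t ht hdt => ?_,
    fun t ht hne => lt_of_deriv_pos_of_deriv_neg htstar
      (fun x hx => (hderiv x hx).continuousAt.continuousWithinAt) (fun x hx => hpos x hx.1 hx.2)
      hneg ht hne, hpos, hneg⟩
  by_contra hne
  rcases Ne.lt_or_gt hne with htt | htt
  exacts [(hpos t ht htt).ne' hdt, (hneg t htt).ne hdt]

theorem stmt0 (a b c α ρ p : ℝ) (ha : 0 < a) (hb : 0 < b) (hp : 4 < p)
    (hα : α < 0) (hρ : 0 < ρ) (h : ℝ → ℝ)
    (hdef : ∀ t : ℝ, 0 < t →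
      h t = (1/2) * a * t ^ 2 + c - α * ρ ^ 2 / 4 * Real.log t - b / p * t ^ (p - 2)) :
    ∃ tstar : ℝ, 0 < tstar ∧ deriv h tstar = 0 ∧
      (∀ t, 0 < t → deriv h t = 0 → t = tstar) ∧
      (∀ t, 0 < t → t ≠ tstar → h t < h tstar) ∧
      (∀ t, 0 < t → t < tstar → 0 < deriv h t) ∧
      (∀ t, tstar < t → deriv h t < 0) :=
  stmt0_general a b c α ρ p hb hp hα hρ h hdef
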